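/- Let σ ⊆ ℚⁿ be a pointed polyhedral cone, P an integral σ∨-polyhedron contained in σ∨, and I[P] = ⨁_{m ∈ P∩ℤⁿ} k·χ^m ⊆ A = k[σ∨∩ℤⁿ]. Then for every integer e ≥ 1 the integral closure of I[P]^e in A equals I[eP] = ⨁_{m ∈ (eP)∩ℤⁿ} k·χ^m. -/

import Mathlib

open scoped Pointwise
open Finset

namespace Paper

/-- Standard pairing on `ℚⁿ`. -/
def dot {n : ℕ} (m v : Fin n → ℚ) : ℚ := ∑ i, m i * v i

/-- Dual cone `σ∨ = {m | ∀ v ∈ σ, ⟨m,v⟩ ≥ 0}`. -/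
def dualCone {n : ℕ} (σ : Set (Fin n → ℚ)) : Set (Fin n → ℚ) :=
  {m | ∀ v ∈ σ, 0 ≤ dot m v}

/-- A polyhedral cone: the cone generated by finitely many vectors. -/
def IsPolyhedralCone {n : ℕ} (σ : Set (Fin n → ℚ)) : Prop :=
  ∃ (k : ℕ) (g : Fin k → Fin n → ℚ),
    σ = {v | ∃ c : Fin k → ℚ, (∀ i, 0 ≤ c i) ∧ v = ∑ i, c i • g i}

/-- A pointed (strongly convex) cone contains no line. -/
def Pointed {n : ℕ} (σ : Set (Fin n → ℚ)) : Prop := ∀ v ∈ σ, -v ∈ σ → v = 0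

/-- The canonical embedding `ℤⁿ → ℚⁿ`. -/
def Lq {n : ℕ} (m : Fin n → ℤ) : Fin n → ℚ := fun i => (m i : ℚ)

/-- A rational vector is a lattice point if all coordinates are integers. -/
def IsLatticePt {n : ℕ} (v : Fin n → ℚ) : Prop := ∀ i, ∃ z : ℤ, v i = (z : ℚ)

/-- A `σ`-polyhedron: Minkowski sum of a (nonempty) polytope with the cone `σ`. -/
def IsSigmaPolyhedron {n : ℕ} (σ Δ : Set (Fin n → ℚ)) : Prop :=
  ∃ F : Finset (Fin n → ℚ), F.Nonempty ∧ Δ = convexHull ℚ (↑F : Set (Fin n → ℚ)) + σ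

/-- An integral `σv`-polyhedron: Minkowski sum of a lattice polytope with `σv`. -/
def IsIntegralPoly {n : ℕ} (σv P : Set (Fin n → ℚ)) : Prop :=
  ∃ F : Finset (Fin n → ℤ), F.Nonempty ∧ P = convexHull ℚ (Lq '' (↑F : Set (Fin n → ℤ))) + σv

/-- The `e`-fold Minkowski sum `eP` of `P`, with the convention `0P = σv`. -/
def mink {n : ℕ} (σv P : Set (Fin n → ℚ)) : ℕ → Set (Fin n → ℚ)
  | 0 => σv
  | 1 => P
  | (e + 2) => mink σv P (e + 1) + P

/-- The semigroup `σ∨ ∩ ℤⁿ` of lattice points of the dual cone. -/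
def latticeDual {n : ℕ} (σ : Set (Fin n → ℚ)) : AddSubmonoid (Fin n → ℤ) where
  carrier := {m | Lq m ∈ dualCone σ}
  zero_mem' := by
    intro v hv
    simp [dot, Lq]
  add_mem' := by
    intro a b ha hb v hv
    have h1 := ha v hv
    have h2 := hb v hv
    have h : dot (Lq (a + b)) v = dot (Lq a) v + dot (Lq b) v := by
      simp only [dot, Lq, Pi.add_apply]
      rw [← Finset.sum_add_distrib]
      apply Finset.sum_congr rfl
      intro i _
      push_cast
      ring
    rw [Set.mem_setOf_eq] at *
    simpa [dualCone, h] using add_nonneg h1 h2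

/-- The monomial `χ^m` in the semigroup algebra `k[σ∨ ∩ ℤⁿ]`. -/
noncomputable def mono (k : Type*) [CommRing k] {n : ℕ} (σ : Set (Fin n → ℚ))
    (m : latticeDual σ) : AddMonoidAlgebra k (latticeDual σ) :=
  AddMonoidAlgebra.single m 1

/-- The monomial ideal `I[P]` generated by the monomials `χ^m`, `m ∈ P ∩ ℤⁿ`. -/
noncomputable def idealOf (k : Type*) [CommRing k] {n : ℕ} (σ : Set (Fin n → ℚ))
    (P : Set (Fin n → ℚ)) : Ideal (AddMonoidAlgebra k (latticeDual σ)) :=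
  Ideal.span {f | ∃ m : latticeDual σ, Lq (m : Fin n → ℤ) ∈ P ∧ f = mono k σ m}

/-- `a` satisfies an equation of integral dependence over the ideal `I`:
`a^r + λ₁ a^(r-1) + ⋯ + λ_r = 0` with `λᵢ ∈ Iⁱ`. -/
def IntegralOverIdeal {A : Type*} [CommRing A] (I : Ideal A) (a : A) : Prop :=
  ∃ r : ℕ, 0 < r ∧ ∃ c : ℕ → A, (∀ i ∈ Finset.Icc 1 r, c i ∈ I ^ i) ∧
    a ^ r + ∑ i ∈ Finset.Icc 1 r, c i * a ^ (r - i) = 0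

/-- A monomial (torus-homogeneous) ideal of `k[σ∨ ∩ ℤⁿ]`. -/
def IsMonomialIdeal (k : Type*) [CommRing k] {n : ℕ} (σ : Set (Fin n → ℚ))
    (I : Ideal (AddMonoidAlgebra k (latticeDual σ))) : Prop :=
  ∃ S : Set (latticeDual σ), I = Ideal.span {f | ∃ m ∈ S, f = mono k σ m}

/-!
For `w ∈ σ` the weight `m ↦ ⟨m, w⟩` is additive on monomials, and in the domain `A` the lowest
weight of a product is the sum of the lowest weights. If `a` is integral over `I[P]^e` and
`P ⊆ {⟨·, w⟩ ≥ μ}`, comparing lowest weights in an equation of integral dependence shows that every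
monomial of `a` has weight at least `eμ`. These inequalities, for all `w ∈ σ`, cut out `eP`: this
is Farkas' lemma, which over `ℚ` follows by Fourier–Motzkin elimination.

Conversely, for a lattice point `u ∈ eP = e • P`, clearing denominators in a convex combination of
the vertices of `P` writes `L u` as `e` times a sum of `L` vertices plus a point of `σ∨`, so
`(χ^u)^L ∈ (I[P]^e)^L`. Such monomials are integral over `I[P]^e`, and so are their sums, since
`a` is integral over an ideal `J` exactly when `a X` is integral over the Rees algebra `A[J X]`.
-/

open Matrix

section Farkas

theorem exists_between_of_forall_le {α β : Type*} [Finite α] [Fintype β] {L : α → ℚ}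
    {U : β → ℚ} (h : ∀ a b, L a ≤ U b) : ∃ t, (∀ a, L a ≤ t) ∧ ∀ b, t ≤ U b := by
  obtain ⟨t₀, ht₀⟩ := (Set.finite_range L).bddAbove
  rcases isEmpty_or_nonempty β with hβ | hβ
  · exact ⟨t₀, fun a => ht₀ ⟨a, rfl⟩, isEmptyElim⟩
  · exact ⟨univ.inf' univ_nonempty U, fun a => le_inf' _ _ fun b _ => h a b,
      fun b => inf'_le _ (mem_univ b)⟩

variable {ι : Type*}

/-- Fourier–Motzkin elimination of a variable occurring with coefficients `a`: the rows where it
does not occur are kept, and each row where it occurs positively is combined with each row where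
it occurs negatively. -/
def elimMatrix [DecidableEq ι] (a : ι → ℚ) :
    Matrix ({i // a i = 0} ⊕ {i // 0 < a i} × {i // a i < 0}) ι ℚ :=
  Matrix.of <| Sum.elim (fun i => Pi.single i.1 1)
    fun pq => Pi.single pq.1.1 (-a pq.2) + Pi.single pq.2.1 (a pq.1)

theorem elimMatrix_nonneg [DecidableEq ι] (a : ι → ℚ) : ∀ r i, 0 ≤ elimMatrix a r i := by
  rintro (i | ⟨p, q⟩) j
  · simp only [elimMatrix, of_apply, Sum.elim_inl, Pi.single_apply]
    split_ifs <;> norm_num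
  · have := p.2; have := q.2
    simp only [elimMatrix, of_apply, Sum.elim_inr, Pi.add_apply, Pi.single_apply]
    split_ifs <;> linarith

variable [Fintype ι]

theorem elimMatrix_mulVec [DecidableEq ι] (a v : ι → ℚ) :
    elimMatrix a *ᵥ v = Sum.elim (fun i : {i // a i = 0} => v i)
      fun pq : {i // 0 < a i} × {i // a i < 0} => -a pq.2 * v pq.1 + a pq.1 * v pq.2 := by
  ext (i | pq)
  · simp [elimMatrix, mulVec, single_dotProduct]
  · simp only [elimMatrix, mulVec, of_apply, Sum.elim_inr]
    rw [add_dotProduct, single_dotProduct, single_dotProduct]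

theorem elimMatrix_mulVec_self [DecidableEq ι] (a : ι → ℚ) : elimMatrix a *ᵥ a = 0 := by
  rw [elimMatrix_mulVec]
  ext (i | pq)
  · exact i.2
  · simp only [Sum.elim_inr, Pi.zero_apply]
    ring

theorem exists_mul_le_of_elimMatrix_mulVec_nonneg [DecidableEq ι] {a β : ι → ℚ}
    (h : 0 ≤ elimMatrix a *ᵥ β) : ∃ t, ∀ i, a i * t ≤ β i := by
  rw [elimMatrix_mulVec] at h
  obtain ⟨t, hlow, hup⟩ := exists_between_of_forall_le
    (L := fun q : {i // a i < 0} => β q / a q) (U := fun p : {i // 0 < a i} => β p / a p)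
    fun q p => by
      have := h (Sum.inr (p, q))
      simp only [Pi.zero_apply, Sum.elim_inr] at this
      rw [← neg_div_neg_eq, div_le_div_iff₀ (neg_pos.2 q.2) p.2]
      linarith
  refine ⟨t, fun i => ?_⟩
  rcases lt_trichotomy (a i) 0 with hi | hi | hi
  · exact (div_le_iff_of_neg hi).1 (hlow ⟨i, hi⟩) |>.trans_eq' (mul_comm _ _)
  · simpa [hi] using h (Sum.inl ⟨i, hi⟩)
  · exact (mul_comm _ _).trans_le ((le_div_iff₀ hi).1 (hup ⟨i, hi⟩))

theorem exists_nonneg_vecMul_eq_zero_dotProduct_neg {N : ℕ} (A : Matrix ι (Fin N) ℚ)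
    (b : ι → ℚ) (h : ¬ ∃ x, A *ᵥ x ≤ b) : ∃ y, 0 ≤ y ∧ y ᵥ* A = 0 ∧ y ⬝ᵥ b < 0 := by
  classical
  induction N generalizing ι with
  | zero =>
    obtain ⟨i, hi⟩ : ∃ i, b i < 0 := by
      by_contra! hb
      exact h ⟨0, fun i => by simpa [mulVec, dotProduct] using hb i⟩
    exact ⟨Pi.single i 1, Pi.single_nonneg.2 zero_le_one, funext fun j => j.elim0,
      by simpa [single_dotProduct] using hi⟩
  | succ N ih =>
    set a : ι → ℚ := fun i => A i (Fin.last N)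
    set A₀ : Matrix ι (Fin N) ℚ := A.submatrix id Fin.castSucc
    have hreduced : ¬ ∃ x', (elimMatrix a * A₀) *ᵥ x' ≤ elimMatrix a *ᵥ b := by
      rintro ⟨x', hx'⟩
      obtain ⟨t, ht⟩ := exists_mul_le_of_elimMatrix_mulVec_nonneg (β := b - A₀ *ᵥ x') <| by
        rw [mulVec_sub, mulVec_mulVec]
        exact sub_nonneg.2 hx'
      refine h ⟨Fin.snoc x' t, fun i => ?_⟩
      have hrow : (A *ᵥ Fin.snoc x' t) i = (A₀ *ᵥ x') i + a i * t := by
        simp [mulVec, dotProduct, Fin.sum_univ_castSucc, A₀, a, mul_comm]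
      have := ht i
      rw [Pi.sub_apply] at this
      linarith
    obtain ⟨z, hz0, hzA, hzb⟩ := ih (elimMatrix a * A₀) (elimMatrix a *ᵥ b) hreduced
    refine ⟨z ᵥ* elimMatrix a, fun i => ?_, ?_, by rwa [← dotProduct_mulVec]⟩
    · exact Finset.sum_nonneg fun r _ => mul_nonneg (hz0 r) (elimMatrix_nonneg a r i)
    · ext j
      refine Fin.lastCases ?_ (fun j => ?_) j
      · change (z ᵥ* elimMatrix a) ⬝ᵥ a = 0
        rw [← dotProduct_mulVec, elimMatrix_mulVec_self, dotProduct_zero]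
      · change (z ᵥ* elimMatrix a ᵥ* A₀) j = 0
        rw [vecMul_vecMul, hzA, Pi.zero_apply]

theorem exists_nonneg_ne_zero_vecMul_nonpos {K : ℕ} (V : Matrix ι (Fin K) ℚ)
    (h : ¬ ∃ y, 0 ≤ y ∧ ∀ i, 0 < (V *ᵥ y) i) :
    ∃ l, 0 ≤ l ∧ l ≠ 0 ∧ l ᵥ* V ≤ 0 := by
  -- `V y > 0, y ≥ 0` is solvable iff `V y ≥ 1, y ≥ 0` is.
  have hinfeasible :
      ¬ ∃ y, fromRows (-V) (-1 : Matrix (Fin K) (Fin K) ℚ) *ᵥ y ≤ Sum.elim (-1 : ι → ℚ) 0 := by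
    rintro ⟨y, hy⟩
    refine h ⟨y, fun j => ?_, fun i => ?_⟩
    · simpa [neg_mulVec] using hy (Sum.inr j)
    · have := hy (Sum.inl i)
      simp only [fromRows_mulVec, Sum.elim_inl, neg_mulVec, Pi.neg_apply, Pi.one_apply,
        neg_le_neg_iff] at this
      linarith
  obtain ⟨y, hy0, hyA, hyb⟩ :=
    exists_nonneg_vecMul_eq_zero_dotProduct_neg _ _ hinfeasible
  rw [← Sum.elim_comp_inl_inr y, sumElim_vecMul_fromRows, vecMul_neg, vecMul_neg, vecMul_one,
    neg_add_eq_zero] at hyA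
  rw [← Sum.elim_comp_inl_inr y, sumElim_dotProduct_sumElim, dotProduct_zero, add_zero] at hyb
  refine ⟨y ∘ Sum.inl, fun i => hy0 _, ?_, ?_⟩
  · rintro hl
    simp [hl] at hyb
  · rw [hyA, neg_nonpos]
    exact fun j => hy0 _

end Farkas

section ConvexHull

theorem exists_natCast_eq_mul_of_den_dvd {q : ℚ} (hq : 0 ≤ q) {D : ℕ} (h : q.den ∣ D) :
    ∃ c : ℕ, (c : ℚ) = q * D := by
  obtain ⟨m, rfl⟩ := h
  refine ⟨q.num.toNat * m, ?_⟩
  rw [Nat.cast_mul, Nat.cast_mul, ← mul_assoc, Rat.mul_den_eq_num, ← Int.cast_natCast,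
    Int.toNat_of_nonneg (Rat.num_nonneg.2 hq)]

theorem exists_nsmul_eq_sum_nsmul_of_mem_convexHull {V : Type*} [AddCommGroup V] [Module ℚ V]
    {G : Finset V} {x : V} (hx : x ∈ convexHull ℚ (G : Set V)) :
    ∃ c : V → ℕ, 0 < ∑ y ∈ G, c y ∧ (∑ y ∈ G, c y) • x = ∑ y ∈ G, c y • y := by
  obtain ⟨w, hw0, hw1, rfl⟩ := Finset.mem_convexHull'.1 hx
  set D := ∏ y ∈ G, (w y).den
  have hc : ∀ y ∈ G, ∃ c : ℕ, (c : ℚ) = w y * D := fun y hy =>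
    exists_natCast_eq_mul_of_den_dvd (hw0 y hy) (Finset.dvd_prod_of_mem _ hy)
  choose! c hc using hc
  have hsum : ∑ y ∈ G, c y = D := by
    have : ((∑ y ∈ G, c y : ℕ) : ℚ) = D := by
      rw [Nat.cast_sum, Finset.sum_congr rfl hc, ← Finset.sum_mul, hw1, one_mul]
    exact_mod_cast this
  refine ⟨c, hsum ▸ Finset.prod_pos fun y _ => (w y).den_pos, ?_⟩
  rw [hsum, ← Nat.cast_smul_eq_nsmul ℚ, Finset.smul_sum]
  refine Finset.sum_congr rfl fun y hy => ?_
  rw [smul_smul, ← Nat.cast_smul_eq_nsmul ℚ, hc y hy, mul_comm]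

end ConvexHull

section IntegralOverIdeal

open Polynomial

variable {R : Type*} [CommRing R] {J : Ideal R}

theorem isIntegral_monomial_one_of_pow_mem {x : R} {L : ℕ} (hL : 0 < L) (hx : x ^ L ∈ J ^ L) :
    IsIntegral (reesAlgebra J) (monomial 1 x) :=
  ⟨X ^ L - C ⟨monomial L (x ^ L), reesAlgebra.monomial_mem.2 hx⟩, monic_X_pow_sub_C _ hL.ne',
    by simp [monomial_pow]⟩

/-- The coefficient of `X ^ r` in an equation of integral dependence of `a X` over the Rees
algebra is an equation of integral dependence of `a` over `J`. -/
theorem integralOverIdeal_of_isIntegral {a : R} (h : IsIntegral (reesAlgebra J) (monomial 1 a)) :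
    IntegralOverIdeal J a := by
  obtain ⟨p, hmonic, hp⟩ := h
  rw [← aeval_def] at hp
  set r := p.natDegree
  rcases Nat.eq_zero_or_pos r with hr | hr
  · -- `p = 1`, so `R` is the zero ring
    have h10 : (1 : R[X]) = 0 := by
      simpa [hmonic.natDegree_eq_zero.1 hr] using hp
    have : Subsingleton R :=
      subsingleton_iff_zero_eq_one.1 (by simpa using congrArg (coeff · 0) h10.symm)
    exact ⟨1, one_pos, 0, fun _ _ => zero_mem _, Subsingleton.elim _ _⟩
  have hterm : ∀ i ≤ r,
      (p.coeff i • monomial 1 a ^ i).coeff r = (p.coeff i : R[X]).coeff (r - i) * a ^ i := by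
    intro i hi
    rw [Subalgebra.smul_def, smul_eq_mul, monomial_pow, one_mul, ← coeff_mul_monomial,
      Nat.sub_add_cancel hi]
  have hcoeff := congrArg (coeff · r) hp
  simp only [aeval_eq_sum_range, finsetSum_coeff, coeff_zero] at hcoeff
  rw [Finset.sum_range_succ, Finset.sum_congr rfl fun i hi => hterm i (Finset.mem_range.1 hi).le,
    hterm r le_rfl, hmonic.coeff_natDegree, Nat.sub_self] at hcoeff
  refine ⟨r, hr, fun j => (p.coeff (r - j) : R[X]).coeff j, fun j _ => p.coeff (r - j) |>.2 j, ?_⟩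
  rw [← hcoeff, add_comm, OneMemClass.coe_one, coeff_one_zero, one_mul]
  congr 1
  refine Finset.sum_nbij' (r - ·) (r - ·) (fun j hj => ?_) (fun i hi => ?_) (fun j hj => ?_)
    (fun i hi => ?_) (fun j hj => ?_) <;> simp only [Finset.mem_Icc, Finset.mem_range] at * <;>
    try omega
  rw [Nat.sub_sub_self hj.2]

end IntegralOverIdeal

section LowestWeight

open AddMonoidAlgebra

variable {R S Γ : Type*} [Semiring R] [AddCommMonoid S] [AddCommMonoid Γ] [LinearOrder Γ]
  (D : S →+ Γ)

theorem exists_add_eq_of_mem_support_mul {f g : AddMonoidAlgebra R S} {z : S}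
    (hz : z ∈ (f * g).coeff.support) :
    ∃ x ∈ f.coeff.support, ∃ y ∈ g.coeff.support, x + y = z := by
  classical
  exact Finset.mem_add.1 (support_coeff_mul_subset f g hz)

theorem coeff_mul_eq_zero_of_lt_add {f g : AddMonoidAlgebra R S} {t : S}
    (h : ∀ x ∈ f.coeff.support, ∀ y ∈ g.coeff.support, D t < D x + D y) : (f * g).coeff t = 0 := by
  by_contra ht
  obtain ⟨x, hx, y, hy, rfl⟩ := exists_add_eq_of_mem_support_mul (Finsupp.mem_support_iff.2 ht)
  exact (h x hx y hy).ne (map_add D x y)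

variable [IsOrderedCancelAddMonoid Γ]

theorem le_weight_of_mem_support_mul {f g : AddMonoidAlgebra R S} {α β : Γ}
    (hf : α ∈ lowerBounds (D '' f.coeff.support)) (hg : β ∈ lowerBounds (D '' g.coeff.support)) :
    α + β ∈ lowerBounds (D '' (f * g).coeff.support) := by
  rintro _ ⟨z, hz, rfl⟩
  obtain ⟨x, hx, y, hy, rfl⟩ := exists_add_eq_of_mem_support_mul hz
  rw [map_add]
  exact add_le_add (hf ⟨x, hx, rfl⟩) (hg ⟨y, hy, rfl⟩)

/-- The lowest-weight parts of `f` and `g` multiply to a nonzero element, and every other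
product of monomials has strictly larger weight. -/
theorem isLeast_image_support_mul [NoZeroDivisors (AddMonoidAlgebra R S)]
    {f g : AddMonoidAlgebra R S} {α β : Γ}
    (hf : IsLeast (D '' f.coeff.support) α) (hg : IsLeast (D '' g.coeff.support) β) :
    IsLeast (D '' (f * g).coeff.support) (α + β) := by
  classical
  refine ⟨?_, le_weight_of_mem_support_mul D hf.2 hg.2⟩
  obtain ⟨u, hu, rfl⟩ := hf.1
  obtain ⟨v, hv, rfl⟩ := hg.1
  set f₀ := ofCoeff (f.coeff.filter (D · = D u))
  set f₁ := ofCoeff (f.coeff.filter fun x => ¬ D x = D u)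
  set g₀ := ofCoeff (g.coeff.filter (D · = D v))
  set g₁ := ofCoeff (g.coeff.filter fun y => ¬ D y = D v)
  have hfg : f * g = f₀ * g₀ + (f₀ * g₁ + f₁ * g) := by
    have hf : f = f₀ + f₁ := congrArg ofCoeff (Finsupp.filter_add_filter_not _ _).symm
    have hg : g = g₀ + g₁ := congrArg ofCoeff (Finsupp.filter_add_filter_not _ _).symm
    calc f * g = (f₀ + f₁) * g := by rw [← hf]
      _ = f₀ * (g₀ + g₁) + f₁ * g := by rw [add_mul, ← hg]
      _ = _ := by rw [mul_add, add_assoc]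
  have mem_filter : ∀ {h : AddMonoidAlgebra R S} {p : S → Prop} [DecidablePred p] {x : S},
      x ∈ (ofCoeff (h.coeff.filter p)).coeff.support ↔ x ∈ h.coeff.support ∧ p x := by
    simp [Finsupp.support_filter]
  have hf₀ : f₀ ≠ 0 := fun h => by
    have hmem : u ∈ f₀.coeff.support := mem_filter.2 ⟨hu, rfl⟩
    simp [h] at hmem
  have hg₀ : g₀ ≠ 0 := fun h => by
    have hmem : v ∈ g₀.coeff.support := mem_filter.2 ⟨hv, rfl⟩
    simp [h] at hmem
  obtain ⟨t, ht⟩ := Finsupp.support_nonempty_iff.2 (coeff_eq_zero.not.2 (mul_ne_zero hf₀ hg₀))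
  have hDt : D t = D u + D v := by
    obtain ⟨x, hx, y, hy, rfl⟩ := exists_add_eq_of_mem_support_mul ht
    rw [map_add, (mem_filter.1 hx).2, (mem_filter.1 hy).2]
  have hrest : (f₀ * g₁ + f₁ * g).coeff t = 0 := by
    rw [coeff_add, Finsupp.add_apply, coeff_mul_eq_zero_of_lt_add D, coeff_mul_eq_zero_of_lt_add D,
      add_zero] <;> rw [hDt]
    · intro x hx y hy
      exact add_lt_add_of_lt_of_le
        (lt_of_le_of_ne (hf.2 ⟨x, (mem_filter.1 hx).1, rfl⟩) (Ne.symm (mem_filter.1 hx).2))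
        (hg.2 ⟨y, hy, rfl⟩)
    · intro x hx y hy
      exact add_lt_add_of_le_of_lt (mem_filter.1 hx).2.ge
        (lt_of_le_of_ne (hg.2 ⟨y, (mem_filter.1 hy).1, rfl⟩) (Ne.symm (mem_filter.1 hy).2))
  exact ⟨t, by
    rw [Finset.mem_coe, Finsupp.mem_support_iff, hfg, coeff_add, Finsupp.add_apply, hrest, add_zero]
    exact Finsupp.mem_support_iff.1 ht, hDt⟩

theorem isLeast_image_support_pow [NoZeroDivisors (AddMonoidAlgebra R S)]
    {f : AddMonoidAlgebra R S} {α : Γ} (hf : IsLeast (D '' f.coeff.support) α) (r : ℕ) :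
    IsLeast (D '' (f ^ r).coeff.support) (r • α) := by
  induction r with
  | zero =>
    obtain ⟨⟨x, hx, -⟩, -⟩ := hf
    have : Nontrivial R := nontrivial_of_ne _ _ (Finsupp.mem_support_iff.1 hx)
    simp [one_def]
  | succ r ih => simpa only [pow_succ, succ_nsmul] using isLeast_image_support_mul D ih hf

end LowestWeight

section Polyhedra

variable {n : ℕ}

theorem dot_eq_dotProduct (m v : Fin n → ℚ) : dot m v = m ⬝ᵥ v := rfl

theorem convex_dualCone (σ : Set (Fin n → ℚ)) : Convex ℚ (dualCone σ) := by
  intro x hx y hy a b ha hb _ v hv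
  simp only [dot_eq_dotProduct, add_dotProduct, smul_dotProduct, smul_eq_mul] at *
  exact add_nonneg (mul_nonneg ha (hx v hv)) (mul_nonneg hb (hy v hv))

theorem add_mem_dualCone {σ : Set (Fin n → ℚ)} {x y : Fin n → ℚ} (hx : x ∈ dualCone σ)
    (hy : y ∈ dualCone σ) : x + y ∈ dualCone σ := fun v hv => by
  simp only [dot_eq_dotProduct, add_dotProduct] at *
  exact add_nonneg (hx v hv) (hy v hv)

theorem smul_mem_dualCone {σ : Set (Fin n → ℚ)} {c : ℚ} (hc : 0 ≤ c) {x : Fin n → ℚ}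
    (hx : x ∈ dualCone σ) : c • x ∈ dualCone σ := fun v hv => by
  simp only [dot_eq_dotProduct, smul_dotProduct, smul_eq_mul] at *
  exact mul_nonneg hc (hx v hv)

theorem zero_mem_dualCone (σ : Set (Fin n → ℚ)) : (0 : Fin n → ℚ) ∈ dualCone σ := fun v _ => by
  simp [dot_eq_dotProduct]

variable {K : ℕ} {g : Fin K → Fin n → ℚ} {σ : Set (Fin n → ℚ)}

theorem mem_dualCone_iff_of_eq_cone
    (hσ : σ = {v | ∃ c : Fin K → ℚ, (∀ i, 0 ≤ c i) ∧ v = ∑ i, c i • g i}) {m : Fin n → ℚ} :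
    m ∈ dualCone σ ↔ ∀ i, 0 ≤ dot m (g i) := by
  classical
  refine ⟨fun hm i => hm _ (hσ ▸ ⟨Pi.single i 1, Pi.single_nonneg.2 zero_le_one, ?_⟩), ?_⟩
  · simp [Pi.single_apply]
  · rintro hm v hv
    obtain ⟨c, hc, rfl⟩ := hσ ▸ hv
    simp only [dot_eq_dotProduct, dotProduct_sum, dotProduct_smul, smul_eq_mul] at *
    exact Finset.sum_nonneg fun i _ => mul_nonneg (hc i) (hm i)

/-- Gordan's alternative for the matrix `(⟨p i - x, g j⟩)` either gives `w` or a convex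
combination `c` of the `p i` with `x - c ∈ σ∨`. -/
theorem exists_dot_lt_of_notMem_convexHull_add_dualCone
    (hσ : σ = {v | ∃ c : Fin K → ℚ, (∀ i, 0 ≤ c i) ∧ v = ∑ i, c i • g i})
    {ι : Type*} (s : Finset ι) (p : ι → Fin n → ℚ) {x : Fin n → ℚ}
    (hx : x ∉ convexHull ℚ (p '' s) + dualCone σ) :
    ∃ w ∈ σ, ∀ i ∈ s, dot x w < dot (p i) w := by
  classical
  by_contra! hsep
  let V : Matrix s (Fin K) ℚ := Matrix.of fun i j => dot (p i - x) (g j)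
  have hV : ∀ y i, (V *ᵥ y) i = dot (p i - x) (∑ j, y j • g j) := fun y i => by
    change ∑ j, V i j * y j = _
    rw [dot_eq_dotProduct, dotProduct_sum]
    exact Finset.sum_congr rfl fun j _ => by rw [dotProduct_smul, smul_eq_mul, mul_comm]; rfl
  obtain ⟨l, hl0, hlne, hlV⟩ := exists_nonneg_ne_zero_vecMul_nonpos V <| by
    rintro ⟨y, hy0, hy⟩
    obtain ⟨i, hi, hle⟩ := hsep (∑ j, y j • g j) (by rw [hσ]; exact ⟨y, hy0, rfl⟩)
    have := hy ⟨i, hi⟩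
    rw [hV, dot_eq_dotProduct, sub_dotProduct] at this
    rw [dot_eq_dotProduct, dot_eq_dotProduct] at hle
    linarith
  obtain ⟨i₀, hi₀⟩ := Function.ne_iff.1 hlne
  have hpos : 0 < ∑ i, l i :=
    Finset.sum_pos' (fun i _ => hl0 i) ⟨i₀, Finset.mem_univ _, (hl0 i₀).lt_of_ne' hi₀⟩
  set c := Finset.univ.centerMass l fun i : s => p i with hc
  refine hx ⟨c, Finset.univ.centerMass_mem_convexHull (fun i _ => hl0 i) hpos
    (fun i _ => ⟨i, i.2, rfl⟩), x - c, (mem_dualCone_iff_of_eq_cone hσ).2 fun j => ?_,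
    add_sub_cancel _ _⟩
  have : dot (x - c) (g j) = -(∑ i, l i)⁻¹ * (l ᵥ* V) j := by
    have hlV : (l ᵥ* V) j = ∑ i, l i * ((p i - x) ⬝ᵥ g j) := rfl
    rw [hlV, dot_eq_dotProduct, sub_dotProduct, hc, Finset.centerMass, smul_dotProduct,
      sum_dotProduct]
    simp only [smul_dotProduct, smul_eq_mul, sub_dotProduct, mul_sub, Finset.sum_sub_distrib,
      ← Finset.sum_mul]
    field_simp
    ring
  rw [this]
  exact mul_nonneg_of_nonpos_of_nonpos (neg_nonpos.2 (inv_nonneg.2 hpos.le)) (hlV j)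

def halfSpace (w : Fin n → ℚ) (μ : ℚ) : Set (Fin n → ℚ) := {x | μ ≤ dot x w}

theorem convex_halfSpace (w : Fin n → ℚ) (μ : ℚ) : Convex ℚ (halfSpace w μ) := by
  intro x hx y hy a b ha hb hab
  simp only [halfSpace, Set.mem_ofPred_eq, dot_eq_dotProduct, add_dotProduct, smul_dotProduct,
    smul_eq_mul] at *
  have : μ = a * μ + b * μ := by rw [← add_mul, hab, one_mul]
  nlinarith [mul_le_mul_of_nonneg_left hx ha, mul_le_mul_of_nonneg_left hy hb]

theorem halfSpace_add_subset (w : Fin n → ℚ) (μ μ' : ℚ) :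
    halfSpace w μ + halfSpace w μ' ⊆ halfSpace w (μ + μ') := by
  rintro _ ⟨x, hx, y, hy, rfl⟩
  simp only [halfSpace, Set.mem_ofPred_eq, dot_eq_dotProduct, add_dotProduct] at *
  linarith

theorem halfSpace_add_dualCone_subset {w : Fin n → ℚ} (hw : w ∈ σ) (μ : ℚ) :
    halfSpace w μ + dualCone σ ⊆ halfSpace w μ := by
  rintro _ ⟨x, hx, y, hy, rfl⟩
  have := hy w hw
  simp only [halfSpace, Set.mem_ofPred_eq, dot_eq_dotProduct, add_dotProduct] at *
  linarith

theorem halfSpace_anti (w : Fin n → ℚ) {μ μ' : ℚ} (h : μ ≤ μ') : halfSpace w μ' ⊆ halfSpace w μ :=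
  fun _ hx => h.trans hx

theorem mink_eq_smul {σv P : Set (Fin n → ℚ)} (hP : Convex ℚ P) {e : ℕ} (he : 1 ≤ e) :
    mink σv P e = (e : ℚ) • P := by
  induction e, he using Nat.le_induction with
  | base => simp [mink]
  | succ e he ih =>
    obtain ⟨e, rfl⟩ := Nat.exists_eq_add_of_le' he
    rw [show mink σv P (e + 1 + 1) = mink σv P (e + 1) + P from rfl, ih, Nat.cast_succ (e + 1),
      hP.add_smul (by positivity) zero_le_one, one_smul]

theorem smul_add_dualCone_subset {P : Set (Fin n → ℚ)} (hP : P + dualCone σ ⊆ P) {c : ℚ}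
    (hc : 0 < c) : c • P + dualCone σ ⊆ c • P := by
  rintro _ ⟨_, ⟨p, hp, rfl⟩, s, hs, rfl⟩
  refine ⟨p + c⁻¹ • s, hP ⟨p, hp, _, smul_mem_dualCone (inv_nonneg.2 hc.le) hs, rfl⟩, ?_⟩
  change c • (p + c⁻¹ • s) = c • p + s
  rw [smul_add, smul_inv_smul₀ hc.ne']

end Polyhedra

section MonomialIdeals

open AddMonoidAlgebra

variable {n : ℕ} {σ : Set (Fin n → ℚ)}

theorem Lq_sub (x y : Fin n → ℤ) : Lq (x - y) = Lq x - Lq y := by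
  funext i; simp [Lq]

variable (σ) in
def toQ : latticeDual σ →+ (Fin n → ℚ) where
  toFun m := Lq m
  map_zero' := by funext i; simp [Lq]
  map_add' x y := by funext i; simp [Lq]

theorem toQ_injective : Function.Injective (toQ σ) := fun x y h =>
  Subtype.ext <| funext fun i => by simpa [toQ, Lq] using congrFun h i

variable (σ) in
def weight (w : Fin n → ℚ) : latticeDual σ →+ ℚ where
  toFun m := dot (toQ σ m) w
  map_zero' := by simp [dot_eq_dotProduct]
  map_add' x y := by simp [dot_eq_dotProduct, add_dotProduct]

instance : UniqueSums (latticeDual σ) :=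
  UniqueSums.of_injective_addHom ⟨Subtype.val, fun _ _ => rfl⟩ Subtype.val_injective inferInstance

theorem exists_finset_latticeDual {P : Set (Fin n → ℚ)} (hP : IsIntegralPoly (dualCone σ) P)
    (hPsub : P ⊆ dualCone σ) :
    ∃ F : Finset (latticeDual σ), F.Nonempty ∧ P = convexHull ℚ (toQ σ '' F) + dualCone σ := by
  classical
  obtain ⟨F, hF, rfl⟩ := hP
  have hdual : ∀ f ∈ F, f ∈ latticeDual σ := fun f hf =>
    hPsub ⟨Lq f, subset_convexHull ℚ _ ⟨f, hf, rfl⟩, 0, zero_mem_dualCone σ, add_zero _⟩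
  refine ⟨F.subtype (· ∈ latticeDual σ), ?_, ?_⟩
  · obtain ⟨f, hf⟩ := hF
    exact ⟨⟨f, hdual f hf⟩, Finset.mem_subtype.2 hf⟩
  · have : toQ σ '' ↑(F.subtype (· ∈ latticeDual σ)) = Lq '' ↑F := by
      ext x
      simp only [Set.mem_image, Finset.mem_coe, Finset.mem_subtype]
      exact ⟨fun ⟨m, hm, hx⟩ => ⟨m, hm, hx⟩, fun ⟨f, hf, hx⟩ => ⟨⟨f, hdual f hf⟩, hf, hx⟩⟩
    rw [this]

theorem add_dualCone_subset_of_eq {F : Finset (latticeDual σ)} {P : Set (Fin n → ℚ)}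
    (hPeq : P = convexHull ℚ (toQ σ '' F) + dualCone σ) : P + dualCone σ ⊆ P := by
  rw [hPeq, add_assoc]
  refine Set.add_subset_add subset_rfl ?_
  rintro _ ⟨x, hx, y, hy, rfl⟩
  exact add_mem_dualCone hx hy

theorem subset_halfSpace_inf' {w : Fin n → ℚ} (hw : w ∈ σ) {F : Finset (latticeDual σ)}
    (hF : F.Nonempty) :
    convexHull ℚ (toQ σ '' F) + dualCone σ ⊆ halfSpace w (F.inf' hF ⇑(weight σ w)) := by
  refine (Set.add_subset_add ?_ subset_rfl).trans (halfSpace_add_dualCone_subset hw _)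
  refine convexHull_min ?_ (convex_halfSpace _ _)
  rintro _ ⟨f, hf, rfl⟩
  exact Finset.inf'_le (f := ⇑(weight σ w)) hf

variable {k : Type*} [Field k]

theorem mono_add (x y : latticeDual σ) : mono k σ (x + y) = mono k σ x * mono k σ y := by
  rw [mono, mono, mono, single_mul_single, one_mul]

theorem mono_nsmul (r : ℕ) (x : latticeDual σ) : mono k σ (r • x) = mono k σ x ^ r := by
  rw [mono, mono, single_pow, one_pow]

theorem mono_sum {ι : Type*} (s : Finset ι) (f : ι → latticeDual σ) :
    mono k σ (∑ i ∈ s, f i) = ∏ i ∈ s, mono k σ (f i) := by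
  simp only [mono, prod_single, Finset.prod_const_one]

theorem single_eq_smul_mono (m : latticeDual σ) (c : k) : single m c = c • mono k σ m := by
  rw [mono, smul_single', mul_one]

theorem mono_mem_idealOf {Q : Set (Fin n → ℚ)} {m : latticeDual σ} (hm : toQ σ m ∈ Q) :
    mono k σ m ∈ idealOf k σ Q :=
  Ideal.subset_span ⟨m, hm, rfl⟩

theorem idealOf_mono {Q Q' : Set (Fin n → ℚ)} (h : Q ⊆ Q') : idealOf k σ Q ≤ idealOf k σ Q' :=
  Ideal.span_mono fun _ ⟨m, hm, hf⟩ => ⟨m, h hm, hf⟩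

theorem mem_idealOf_of_forall_mem_support {Q : Set (Fin n → ℚ)}
    {a : AddMonoidAlgebra k (latticeDual σ)} (h : ∀ u ∈ a.coeff.support, toQ σ u ∈ Q) :
    a ∈ idealOf k σ Q := by
  rw [← sum_coeff_single a]
  refine Ideal.sum_mem _ fun u hu => ?_
  rw [single_eq_smul_mono]
  exact Submodule.smul_of_tower_mem _ _ (mono_mem_idealOf (h u hu))

theorem toQ_mem_of_mem_support {Q : Set (Fin n → ℚ)} (hQ : Q + dualCone σ ⊆ Q)
    {a : AddMonoidAlgebra k (latticeDual σ)} (ha : a ∈ idealOf k σ Q) {u : latticeDual σ}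
    (hu : u ∈ a.coeff.support) : toQ σ u ∈ Q := by
  induction ha using Submodule.span_induction generalizing u with
  | mem _ h =>
    obtain ⟨m, hm, rfl⟩ := h
    rwa [Finset.mem_singleton.1 (Finsupp.support_single_subset hu)]
  | zero => simp at hu
  | add x y _ _ hx hy =>
    rcases Finset.mem_union.1 (Finsupp.support_add hu) with h | h
    exacts [hx h, hy h]
  | smul r x _ hx =>
    obtain ⟨y, -, z, hz, rfl⟩ := exists_add_eq_of_mem_support_mul hu
    rw [add_comm, map_add]
    exact hQ ⟨_, hx hz, _, y.2, rfl⟩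

theorem idealOf_mul_le (Q Q' : Set (Fin n → ℚ)) :
    idealOf k σ Q * idealOf k σ Q' ≤ idealOf k σ (Q + Q') := by
  rw [idealOf, idealOf, Ideal.span_mul_span', Ideal.span_le]
  rintro _ ⟨_, ⟨m, hm, rfl⟩, _, ⟨m', hm', rfl⟩, rfl⟩
  change mono k σ m * mono k σ m' ∈ idealOf k σ (Q + Q')
  rw [← mono_add]
  exact mono_mem_idealOf ((map_add (toQ σ) m m').symm ▸ Set.add_mem_add hm hm')

theorem idealOf_halfSpace_pow_le (w : Fin n → ℚ) (μ : ℚ) (j : ℕ) :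
    idealOf k σ (halfSpace w μ) ^ j ≤ idealOf k σ (halfSpace w (j * μ)) := by
  induction j with
  | zero =>
    rw [pow_zero, Ideal.one_eq_top, top_le_iff, Ideal.eq_top_iff_one]
    refine mono_mem_idealOf (m := 0) ?_
    simp [halfSpace, dot_eq_dotProduct]
  | succ j ih =>
    rw [pow_succ, Nat.cast_succ, add_one_mul]
    exact (Ideal.mul_mono_left ih).trans <|
      (idealOf_mul_le _ _).trans (idealOf_mono (halfSpace_add_subset w _ _))

/-- If `ν < eμ`, the monomials of lowest weight `rν` of `a^r` cannot cancel against
`∑ λᵢ a^(r-i)`, all of whose monomials have weight at least `rν + (eμ - ν)`. -/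
theorem mul_le_of_integralOverIdeal {P : Set (Fin n → ℚ)} {e : ℕ} {w : Fin n → ℚ} (hw : w ∈ σ)
    {μ : ℚ} (hP : P ⊆ halfSpace w μ) {a : AddMonoidAlgebra k (latticeDual σ)}
    (ha : IntegralOverIdeal (idealOf k σ P ^ e) a) {ν : ℚ}
    (hν : IsLeast (weight σ w '' a.coeff.support) ν) : e * μ ≤ ν := by
  by_contra! hlt
  obtain ⟨r, -, c, hc, heq⟩ := ha
  set δ := e * μ - ν
  have ha : a ∈ idealOf k σ (halfSpace w ν) :=
    mem_idealOf_of_forall_mem_support fun u hu => hν.2 ⟨u, hu, rfl⟩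
  have hterm : ∀ i ∈ Finset.Icc 1 r, c i * a ^ (r - i) ∈ idealOf k σ (halfSpace w (r * ν + δ)) := by
    intro i hi
    obtain ⟨hi1, hir⟩ := Finset.mem_Icc.1 hi
    have hci : c i ∈ idealOf k σ (halfSpace w ((e * i : ℕ) * μ)) := by
      refine idealOf_halfSpace_pow_le w μ _ ?_
      rw [pow_mul]
      exact Ideal.pow_right_mono (Ideal.pow_right_mono (idealOf_mono hP) e) i (hc i hi)
    have hai := idealOf_halfSpace_pow_le (k := k) w ν (r - i) (Ideal.pow_mem_pow ha _)
    refine idealOf_mono (halfSpace_anti w ?_) <| idealOf_mono (halfSpace_add_subset w _ _) <|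
      idealOf_mul_le _ _ (Ideal.mul_mem_mul hci hai)
    have : (1 : ℚ) ≤ i := by exact_mod_cast hi1
    push_cast [Nat.cast_sub hir]
    nlinarith
  have hpow : a ^ r ∈ idealOf k σ (halfSpace w (r * ν + δ)) := by
    rw [eq_neg_of_add_eq_zero_left heq]
    exact neg_mem (Ideal.sum_mem _ hterm)
  obtain ⟨⟨t, ht, hDt⟩, -⟩ := isLeast_image_support_pow (weight σ w) hν r
  have := toQ_mem_of_mem_support (halfSpace_add_dualCone_subset hw _) hpow ht
  change _ ≤ weight σ w t at this
  rw [hDt, nsmul_eq_mul] at this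
  linarith

theorem mem_idealOf_smul_of_integralOverIdeal {K : ℕ} {g : Fin K → Fin n → ℚ}
    (hσ : σ = {v | ∃ c : Fin K → ℚ, (∀ i, 0 ≤ c i) ∧ v = ∑ i, c i • g i})
    {F : Finset (latticeDual σ)} (hF : F.Nonempty) {P : Set (Fin n → ℚ)}
    (hPeq : P = convexHull ℚ (toQ σ '' F) + dualCone σ) {e : ℕ} (he : 1 ≤ e)
    {a : AddMonoidAlgebra k (latticeDual σ)} (ha : IntegralOverIdeal (idealOf k σ P ^ e) a) :
    a ∈ idealOf k σ ((e : ℚ) • P) := by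
  refine mem_idealOf_of_forall_mem_support fun u hu => ?_
  have hweight : ∀ w ∈ σ, e * F.inf' hF ⇑(weight σ w) ≤ weight σ w u := fun w hw => by
    obtain ⟨v, hv, hvmin⟩ := a.coeff.support.exists_min_image ⇑(weight σ w) ⟨u, hu⟩
    exact (mul_le_of_integralOverIdeal hw (hPeq ▸ subset_halfSpace_inf' hw hF) ha
      ⟨⟨v, hv, rfl⟩, by rintro _ ⟨x, hx, rfl⟩; exact hvmin x hx⟩).trans (hvmin u hu)
  have he' : (e : ℚ) ≠ 0 := by positivity
  have hmem : (e : ℚ)⁻¹ • toQ σ u ∈ P := by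
    rw [hPeq]
    by_contra hx
    obtain ⟨w, hw, hlt⟩ := exists_dot_lt_of_notMem_convexHull_add_dualCone hσ F (toQ σ) hx
    obtain ⟨f, hf, hfmin⟩ := F.exists_mem_eq_inf' hF ⇑(weight σ w)
    have h1 := hlt f hf
    have h2 := hweight w hw
    rw [hfmin] at h2
    change (e : ℚ)⁻¹ • toQ σ u ⬝ᵥ w < weight σ w f at h1
    rw [smul_dotProduct, smul_eq_mul] at h1
    change _ ≤ toQ σ u ⬝ᵥ w at h2
    rw [inv_mul_lt_iff₀ (by positivity)] at h1
    linarith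
  simpa [smul_inv_smul₀ he'] using Set.smul_mem_smul_set (a := (e : ℚ)) hmem

/-- Clearing denominators in a convex combination of the vertices writes `L u` as `e` times a
sum of `L` vertices plus a point of `σ∨`. -/
theorem exists_pow_mono_mem_pow {F : Finset (latticeDual σ)} {P : Set (Fin n → ℚ)}
    (hPeq : P = convexHull ℚ (toQ σ '' F) + dualCone σ) (e : ℕ) {u : latticeDual σ}
    (hu : toQ σ u ∈ (e : ℚ) • P) :
    ∃ L, 0 < L ∧ mono k σ u ^ L ∈ (idealOf k σ P ^ e) ^ L := by
  classical
  obtain ⟨_, hyP, hyu⟩ := hu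
  obtain ⟨y, hy, s, hs, rfl⟩ := hPeq ▸ hyP
  obtain ⟨m, hmpos, hm⟩ := exists_nsmul_eq_sum_nsmul_of_mem_convexHull (G := F.image (toQ σ))
    (x := y) (by rwa [Finset.coe_image])
  simp only [Finset.sum_image toQ_injective.injOn] at hmpos hm
  set L := ∑ f ∈ F, m (toQ σ f)
  set z : latticeDual σ := ∑ f ∈ F, m (toQ σ f) • f
  have hz : toQ σ z = L • y := by simp [z, hm, map_sum, map_nsmul]
  have hr : Lq (↑(L • u) - ↑(e • z)) ∈ dualCone σ := by
    rw [Lq_sub]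
    change toQ σ (L • u) - toQ σ (e • z) ∈ _
    rw [map_nsmul, map_nsmul, hz, ← hyu]
    convert smul_mem_dualCone (c := (L * e : ℚ)) (by positivity) hs using 1
    simp only [← Nat.cast_smul_eq_nsmul ℚ]
    module
  have hLu : L • u = e • z + (⟨_, hr⟩ : latticeDual σ) := Subtype.ext (add_sub_cancel _ _).symm
  refine ⟨L, hmpos, ?_⟩
  rw [← mono_nsmul, hLu, mono_add, mono_nsmul, ← pow_mul, mul_comm, pow_mul]
  refine Ideal.mul_mem_right _ _ (Ideal.pow_mem_pow ?_ e)
  rw [mono_sum, ← Finset.prod_pow_eq_pow_sum]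
  refine Ideal.prod_mem_prod fun f hf => ?_
  rw [mono_nsmul]
  refine Ideal.pow_mem_pow (mono_mem_idealOf ?_) _
  rw [hPeq]
  exact ⟨toQ σ f, subset_convexHull ℚ _ ⟨f, hf, rfl⟩, 0, zero_mem_dualCone σ, add_zero _⟩

theorem integralOverIdeal_of_mem_idealOf_smul {F : Finset (latticeDual σ)} {P : Set (Fin n → ℚ)}
    (hPeq : P = convexHull ℚ (toQ σ '' F) + dualCone σ) {e : ℕ} (he : 1 ≤ e)
    {a : AddMonoidAlgebra k (latticeDual σ)} (ha : a ∈ idealOf k σ ((e : ℚ) • P)) :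
    IntegralOverIdeal (idealOf k σ P ^ e) a := by
  apply integralOverIdeal_of_isIntegral
  rw [← sum_coeff_single a, Finsupp.sum, map_sum]
  refine IsIntegral.sum _ fun u hu => ?_
  obtain ⟨L, hL, hmono⟩ := exists_pow_mono_mem_pow (k := k) hPeq e <|
    toQ_mem_of_mem_support (smul_add_dualCone_subset (add_dualCone_subset_of_eq hPeq)
      (by positivity)) ha hu
  refine isIntegral_monomial_one_of_pow_mem hL ?_
  rw [single_eq_smul_mono, smul_pow]
  exact Submodule.smul_of_tower_mem _ _ hmono

end MonomialIdeals

theorem statement10_general {k : Type*} [Field k]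
    {n : ℕ} (σ : Set (Fin n → ℚ)) (hσ : IsPolyhedralCone σ)
    (P : Set (Fin n → ℚ)) (hP : IsIntegralPoly (dualCone σ) P) (hPsub : P ⊆ dualCone σ)
    (e : ℕ) (he : 1 ≤ e) :
    ∀ a : AddMonoidAlgebra k (latticeDual σ),
      IntegralOverIdeal ((idealOf k σ P) ^ e) a ↔
        a ∈ idealOf k σ (mink (dualCone σ) P e) := by
  obtain ⟨K, g, hσ⟩ := hσ
  obtain ⟨F, hF, hPeq⟩ := exists_finset_latticeDual hP hPsub
  have hPconv : Convex ℚ P := hPeq ▸ (convex_convexHull ℚ _).add (convex_dualCone σ)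
  intro a
  rw [mink_eq_smul hPconv he]
  exact ⟨mem_idealOf_smul_of_integralOverIdeal hσ hF hPeq he,
    integralOverIdeal_of_mem_idealOf_smul hPeq he⟩

/-- for an integral `σ∨`-polyhedron `P ⊆ σ∨` and every `e ≥ 1`, the integral
closure of `I[P]^e` in `A = k[σ∨ ∩ ℤⁿ]` equals `I[eP]`. -/
theorem statement10 {k : Type*} [Field k] [IsAlgClosed k] [CharZero k]
    {n : ℕ} (σ : Set (Fin n → ℚ)) (hσ : IsPolyhedralCone σ) (hσp : Pointed σ)
    (P : Set (Fin n → ℚ)) (hP : IsIntegralPoly (dualCone σ) P) (hPsub : P ⊆ dualCone σ)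
    (e : ℕ) (he : 1 ≤ e) :
    ∀ a : AddMonoidAlgebra k (latticeDual σ),
      IntegralOverIdeal ((idealOf k σ P) ^ e) a ↔
        a ∈ idealOf k σ (mink (dualCone σ) P e) :=
  statement10_general σ hσ P hP hPsub e he

end Paper
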